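/- For any tree frame F = F_{ξη}[A] (ξ ∈ {i, r}, η ∈ {n, t}) with 0 ∉ A: Log(N_ω(F)) ⊆ Log(F). -/

import Mathlib

set_option autoImplicit false

/-- Modal formulas with `n` modalities (propositional letters indexed by `ℕ`). -/
inductive MFormula (n : ℕ) : Type
  | prop : ℕ → MFormula n
  | bot  : MFormula n
  | imp  : MFormula n → MFormula n → MFormula n
  | box  : Fin n → MFormula n → MFormula n

namespace MFormula

/-- Negation as an abbreviation: ¬φ := φ → ⊥. -/
def neg {n : ℕ} (φ : MFormula n) : MFormula n := φ.imp .bot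

/-- Uniform substitution of formulas for propositional letters. -/
def subst {n : ℕ} (s : ℕ → MFormula n) : MFormula n → MFormula n
  | prop p  => s p
  | bot     => bot
  | imp φ ψ => imp (φ.subst s) (ψ.subst s)
  | box i φ => box i (φ.subst s)

end MFormula

/-- A classical tautology: true under every boolean valuation of formulas
(a valuation respecting `⊥` and `→`, arbitrary on letters and boxed formulas). -/
def IsTautology {n : ℕ} (φ : MFormula n) : Prop :=
  ∀ v : MFormula n → Prop,
    ¬ v .bot → (∀ ψ χ : MFormula n, v (ψ.imp χ) ↔ (v ψ → v χ)) → v φ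

/-- Normal modal logics with `n` modalities. -/
structure IsNormalLogic {n : ℕ} (L : Set (MFormula n)) : Prop where
  taut : ∀ φ : MFormula n, IsTautology φ → φ ∈ L
  kax : ∀ (i : Fin n) (p q : MFormula n),
    ((MFormula.box i (p.imp q)).imp ((MFormula.box i p).imp (MFormula.box i q))) ∈ L
  mp : ∀ φ ψ : MFormula n, φ.imp ψ ∈ L → φ ∈ L → ψ ∈ L
  subst : ∀ (φ : MFormula n) (s : ℕ → MFormula n), φ ∈ L → φ.subst s ∈ L
  nec : ∀ (i : Fin n) (φ : MFormula n), φ ∈ L → MFormula.box i φ ∈ L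

/-- The smallest normal logic containing `Γ`. -/
def NormalClosure {n : ℕ} (Γ : Set (MFormula n)) : Set (MFormula n) :=
  ⋂₀ {L : Set (MFormula n) | IsNormalLogic L ∧ Γ ⊆ L}

/-- The axiom □p → ¬□¬p. -/
def dAx : MFormula 1 :=
  (MFormula.box 0 (.prop 0)).imp (MFormula.neg (MFormula.box 0 (MFormula.neg (.prop 0))))

/-- The axiom □p → p. -/
def tAx : MFormula 1 := (MFormula.box 0 (.prop 0)).imp (.prop 0)

/-- The axiom □p → □□p. -/
def fourAx : MFormula 1 :=
  (MFormula.box 0 (.prop 0)).imp (MFormula.box 0 (MFormula.box 0 (.prop 0)))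

def LogicK : Set (MFormula 1) := NormalClosure ∅
def LogicD : Set (MFormula 1) := NormalClosure (LogicK ∪ {dAx})
def LogicT : Set (MFormula 1) := NormalClosure (LogicK ∪ {tAx})
def LogicD4 : Set (MFormula 1) := NormalClosure (LogicD ∪ {fourAx})
def LogicS4 : Set (MFormula 1) := NormalClosure (LogicT ∪ {fourAx})

/-- Translation of a unimodal formula into the bimodal language, replacing □ by □_i. -/
def trTo (i : Fin 2) : MFormula 1 → MFormula 2
  | .prop p  => .prop p
  | .bot     => .bot
  | .imp φ ψ => .imp (trTo i φ) (trTo i ψ)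
  | .box _ φ => .box i (trTo i φ)

/-- The fusion `L₁ ⊗ L₂` of two unimodal logics: the smallest bimodal normal logic
containing the translation of `L₁` (□ ↦ □₁) and of `L₂` (□ ↦ □₂). -/
def Fusion (L₁ L₂ : Set (MFormula 1)) : Set (MFormula 2) :=
  NormalClosure (trTo 0 '' L₁ ∪ trTo 1 '' L₂)

/-- Truth in a Kripke model. -/
def kSat {n : ℕ} {W : Type} (R : Fin n → W → W → Prop) (V : ℕ → Set W) :
    W → MFormula n → Prop
  | w, .prop p  => w ∈ V p
  | _, .bot     => False
  | w, .imp φ ψ => kSat R V w φ → kSat R V w ψ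
  | w, .box i φ => ∀ v : W, R i w v → kSat R V v φ

/-- The logic of a Kripke `n`-frame. -/
def KLogn {n : ℕ} {W : Type} [Nonempty W] (R : Fin n → W → W → Prop) :
    Set (MFormula n) :=
  {φ | ∀ (V : ℕ → Set W) (w : W), kSat R V w φ}

/-- The logic of a unimodal Kripke frame. -/
def KLog {W : Type} [Nonempty W] (R : W → W → Prop) : Set (MFormula 1) :=
  KLogn (fun _ => R)

/-- The logic of a bimodal Kripke frame. -/
def KLog2 {W : Type} [Nonempty W] (R₁ R₂ : W → W → Prop) : Set (MFormula 2) :=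
  KLogn ![R₁, R₂]

/-- Truth in a (monotone) neighborhood model: `x ⊨ □_i φ` iff the truth set of `φ`
belongs to the filter `τ i x`. -/
def nSat {n : ℕ} {X : Type} (τ : Fin n → X → Filter X) (V : ℕ → Set X) :
    X → MFormula n → Prop
  | x, .prop p  => x ∈ V p
  | _, .bot     => False
  | x, .imp φ ψ => nSat τ V x φ → nSat τ V x ψ
  | x, .box i φ => {y | nSat τ V y φ} ∈ τ i x

/-- The logic of a neighborhood `n`-frame. -/
def NLogn {n : ℕ} {X : Type} [Nonempty X] (τ : Fin n → X → Filter X) :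
    Set (MFormula n) :=
  {φ | ∀ (V : ℕ → Set X) (x : X), nSat τ V x φ}

/-- The logic of a unimodal neighborhood frame. -/
def NLog {X : Type} [Nonempty X] (τ : X → Filter X) : Set (MFormula 1) :=
  NLogn (fun _ => τ)

/-- The logic of a neighborhood 2-frame. -/
def NLog2 {X : Type} [Nonempty X] (τ₁ τ₂ : X → Filter X) : Set (MFormula 2) :=
  NLogn ![τ₁, τ₂]

/-- Validity of a unimodal formula in a neighborhood frame. -/
def NValid {X : Type} (τ : X → Filter X) (φ : MFormula 1) : Prop :=
  ∀ (V : ℕ → Set X) (x : X), nSat (fun _ => τ) V x φ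

/-- The neighborhood frame `N(F)` of a Kripke frame `F = (W, R)`:
`τ(w)` is the principal filter of `R(w)`. -/
def nOfK {W : Type} (R : W → W → Prop) (w : W) : Filter W :=
  Filter.principal {v | R w v}

/-- Bounded morphisms between neighborhood frames (with neighborhood functions
indexed by `ι`). -/
def IsNdMorphism {ι X Y : Type} (τ : ι → X → Filter X) (σ : ι → Y → Filter Y)
    (f : X → Y) : Prop :=
  Function.Surjective f ∧
    ∀ (i : ι) (x : X),
      (∀ U ∈ τ i x, f '' U ∈ σ i (f x)) ∧
      (∀ V ∈ σ i (f x), ∃ U ∈ τ i x, f '' U ⊆ V)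

/-- First neighborhood function of the product of two neighborhood frames:
`U ∈ τ'_1(x₁,x₂)` iff `∃ V ∈ τ₁ x₁, V × {x₂} ⊆ U`. -/
def prodTau1 {X₁ X₂ : Type} (τ₁ : X₁ → Filter X₁) (p : X₁ × X₂) :
    Filter (X₁ × X₂) :=
  (τ₁ p.1).map (fun x => (x, p.2))

/-- Second neighborhood function of the product of two neighborhood frames:
`U ∈ τ'_2(x₁,x₂)` iff `∃ V ∈ τ₂ x₂, {x₁} × V ⊆ U`. -/
def prodTau2 {X₁ X₂ : Type} (τ₂ : X₂ → Filter X₂) (p : X₁ × X₂) :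
    Filter (X₁ × X₂) :=
  (τ₂ p.2).map (fun y => (p.1, y))

/-- The successor relation on finite sequences: `a R b` iff `b = a·x` for some `x ∈ A`. -/
def sucRel (A : Type) (a b : List A) : Prop := ∃ x : A, b = a ++ [x]

/-- The four kinds of tree frames: irreflexive/reflexive, non-transitive/transitive. -/
inductive TreeKind : Type
  | inn  -- irreflexive non-transitive: F_in
  | rn   -- reflexive non-transitive: F_rn (reflexive closure)
  | itr  -- irreflexive transitive: F_it (transitive closure)
  | rt   -- reflexive transitive: F_rt (reflexive-transitive closure)

/-- The relation of the tree frame `F_{ξη}[A]` on `A*`. -/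
def treeRel (A : Type) : TreeKind → List A → List A → Prop
  | .inn => sucRel A
  | .rn  => fun a b => a = b ∨ sucRel A a b
  | .itr => Relation.TransGen (sucRel A)
  | .rt  => Relation.ReflTransGen (sucRel A)

/-- First relation of the product frame `F₁ ⊗ F₂` on `(A ⊔ B)*`:
`x R'_1 y` iff `y = x·z` for some `z ∈ A*` with `Λ R₁ z`. -/
def prodRel1 (A B : Type) (k : TreeKind) (x y : List (A ⊕ B)) : Prop :=
  ∃ z : List A, treeRel A k [] z ∧ y = x ++ z.map Sum.inl

/-- Second relation of the product frame `F₁ ⊗ F₂` on `(A ⊔ B)*`. -/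
def prodRel2 (A B : Type) (k : TreeKind) (x y : List (A ⊕ B)) : Prop :=
  ∃ z : List B, treeRel B k [] z ∧ y = x ++ z.map Sum.inr

/-- Pseudo-infinite sequences over `A ∪ {0}` (with `0` modelled by `none`, so
automatically `0 ∉ A`) that are eventually `0`. -/
def PSeq (A : Type) : Type :=
  {α : ℕ → Option A // ∃ N, ∀ k ≥ N, α k = none}

instance {A : Type} : Nonempty (PSeq A) := ⟨⟨fun _ => none, 0, fun _ _ => rfl⟩⟩

/-- `st(α)`: the least `N` such that `α` has only zeros from position `N` on. -/
noncomputable def PSeq.st {A : Type} (α : PSeq A) : ℕ :=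
  sInf {N | ∀ k ≥ N, α.1 k = none}

/-- `f_F(α)`: the finite sequence obtained from `α` by deleting all zeros. -/
noncomputable def PSeq.forget {A : Type} (α : PSeq A) : List A :=
  ((List.range α.st).map α.1).reduceOption

/-- The basic neighborhood `U_k(α)` of `α`, relative to the relation `R` on `A*`:
`{β ∈ X : α|_m = β|_m and f_F(α) R f_F(β)}` where `m = max(k, st(α))`. -/
def Unbhd {A : Type} (R : List A → List A → Prop) (k : ℕ) (α : PSeq A) :
    Set (PSeq A) :=
  {β | (∀ i < max k α.st, α.1 i = β.1 i) ∧ R α.forget β.forget}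

/-- The neighborhood function of `N_ω(F)`: `τ(α)` is the filter generated by the
base `{U_k(α) : k ∈ ℕ}`. -/
noncomputable def nOmega {A : Type} (R : List A → List A → Prop) (α : PSeq A) :
    Filter (PSeq A) :=
  ⨅ k : ℕ, Filter.principal (Unbhd R k α)

/-- The interleaving `x₁ y₁ x₂ y₂ …` of two pseudo-infinite sequences. -/
def interleave {A B : Type} (α : PSeq A) (β : PSeq B) : PSeq (A ⊕ B) :=
  ⟨fun n => if n % 2 = 0 then (α.1 (n / 2)).map Sum.inl
            else (β.1 (n / 2)).map Sum.inr, by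
    obtain ⟨N₁, h₁⟩ := α.2
    obtain ⟨N₂, h₂⟩ := β.2
    refine ⟨2 * max N₁ N₂, fun k hk => ?_⟩
    have hdiv : max N₁ N₂ ≤ k / 2 := by omega
    by_cases h : k % 2 = 0
    · simp [h, h₁ (k / 2) (le_trans (le_max_left _ _) hdiv)]
    · simp [h, h₂ (k / 2) (le_trans (le_max_right _ _) hdiv)]⟩

/-- The map `g`: delete all zeros from the interleaving of `α` and `β`. -/
noncomputable def gMap {A B : Type} (p : PSeq A × PSeq B) : List (A ⊕ B) :=
  (interleave p.1 p.2).forget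

/-!
Deleting the zeros, `f_F : N_ω(F) → F` is onto and preserves truth once each Kripke valuation
`V` is pulled back to `f_F⁻¹ ∘ V`, so every refutation in `F` lifts to one in `N_ω(F)`.
Truth is preserved because `f_F⁻¹(T) ∈ τ(α)` iff `T` contains every `R`-successor of `f_F(α)`.
One direction holds already for `U_0(α)`. For the other, every successor of `f_F(α)` in a tree
frame has the form `f_F(α)·z`, and it is the image of the sequence that copies `α` up to
`m = max(k, st(α))` and then spells out `z`; that sequence lies in `U_k(α)`.
-/

section TruthPreservingMap

variable {X W : Type} {τ : X → Filter X} {R : W → W → Prop} {f : X → W}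

theorem nSat_preimage_iff_kSat
    (hbox : ∀ (x : X) (T : Set W), f ⁻¹' T ∈ τ x ↔ ∀ w, R (f x) w → w ∈ T)
    (V : ℕ → Set W) (φ : MFormula 1) (x : X) :
    nSat (fun _ => τ) (fun p => f ⁻¹' V p) x φ ↔ kSat (fun _ => R) V (f x) φ := by
  induction φ generalizing x with
  | prop p => rfl
  | bot => rfl
  | imp φ ψ ihφ ihψ => exact imp_congr (ihφ x) (ihψ x)
  | box i φ ih =>
    have htruth : {y | nSat (fun _ => τ) (fun p => f ⁻¹' V p) y φ} =
        f ⁻¹' {w | kSat (fun _ => R) V w φ} := Set.ext ih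
    simp only [nSat, kSat, htruth]
    exact hbox x _

theorem NLog_subset_KLog_of_surjective [Nonempty X] [Nonempty W] (hf : f.Surjective)
    (hbox : ∀ (x : X) (T : Set W), f ⁻¹' T ∈ τ x ↔ ∀ w, R (f x) w → w ∈ T) :
    NLog τ ⊆ KLog R := by
  intro φ hφ V w
  obtain ⟨x, rfl⟩ := hf w
  exact (nSat_preimage_iff_kSat hbox V φ x).1 (hφ _ x)

end TruthPreservingMap

theorem List.reduceOption_map_getElem?_range {A : Type} (l : List A) :
    ((List.range l.length).map (l[·]?)).reduceOption = l := by
  have hsome : (List.range l.length).map (l[·]?) = l.map some := by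
    apply List.ext_getElem <;> simp
  rw [hsome, List.reduceOption, List.filterMap_map]
  exact List.filterMap_some

namespace PSeq

variable {A : Type}

theorem apply_eq_none_of_st_le (α : PSeq A) {k : ℕ} (hk : α.st ≤ k) : α.1 k = none :=
  Nat.sInf_mem (s := {N | ∀ k ≥ N, α.1 k = none}) α.2 k hk

theorem forget_eq_of_eventually_none (α : PSeq A) {N : ℕ} (hN : ∀ k ≥ N, α.1 k = none) :
    α.forget = ((List.range N).map α.1).reduceOption := by
  have hst : α.st ≤ N := Nat.sInf_le hN
  obtain ⟨d, rfl⟩ := Nat.exists_eq_add_of_le hst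
  have htail : (List.range d).map (α.1 ∘ (α.st + ·)) = List.replicate d none := by
    rw [List.eq_replicate_iff]
    simp only [List.length_map, List.length_range, List.mem_map, Function.comp_apply, true_and]
    rintro _ ⟨i, -, rfl⟩
    exact α.apply_eq_none_of_st_le (Nat.le_add_right _ _)
  rw [forget, List.range_add, List.map_append, List.reduceOption_append, List.map_map, htail,
    List.reduceOption_replicate_none, List.append_nil]

def extend (α : PSeq A) (m : ℕ) (z : List A) : PSeq A :=
  ⟨fun n => if n < m then α.1 n else z[n - m]?,
    m + z.length, fun k hk => by simp [show ¬k < m by omega]; omega⟩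

theorem extend_apply_of_lt (α : PSeq A) {m n : ℕ} (z : List A) (hn : n < m) :
    (α.extend m z).1 n = α.1 n :=
  if_pos hn

theorem extend_apply_of_le (α : PSeq A) {m n : ℕ} (z : List A) (hn : m ≤ n) :
    (α.extend m z).1 n = z[n - m]? :=
  if_neg hn.not_gt

theorem forget_extend (α : PSeq A) {m : ℕ} (z : List A) (hm : α.st ≤ m) :
    (α.extend m z).forget = α.forget ++ z := by
  have hzero : ∀ k ≥ m + z.length, (α.extend m z).1 k = none := fun k hk => by
    rw [α.extend_apply_of_le z (by omega), List.getElem?_eq_none (by omega)]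
  have hhead : (List.range m).map (α.extend m z).1 = (List.range m).map α.1 :=
    List.map_congr_left fun n hn => α.extend_apply_of_lt z (List.mem_range.1 hn)
  have htail : (List.range z.length).map ((α.extend m z).1 ∘ (m + ·)) =
      (List.range z.length).map (z[·]?) :=
    List.map_congr_left fun n _ => by
      simp only [Function.comp_apply, α.extend_apply_of_le z (Nat.le_add_right m n),
        Nat.add_sub_cancel_left]
  rw [forget_eq_of_eventually_none _ hzero, List.range_add, List.map_append,
    List.reduceOption_append, List.map_map, hhead, htail, List.reduceOption_map_getElem?_range,
    forget_eq_of_eventually_none α fun k hk => α.apply_eq_none_of_st_le (hm.trans hk)]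

theorem forget_surjective : (forget : PSeq A → List A).Surjective := by
  let zero : PSeq A := ⟨fun _ => none, 0, fun _ _ => rfl⟩
  have hst : zero.st = 0 := Nat.eq_zero_of_le_zero (Nat.sInf_le fun _ _ => rfl)
  intro w
  refine ⟨zero.extend 0 w, ?_⟩
  rw [forget_extend zero w hst.le, forget_eq_of_eventually_none (N := 0) zero fun _ _ => rfl]
  rfl

end PSeq

theorem Unbhd_antitone {A : Type} (R : List A → List A → Prop) (α : PSeq A) :
    Antitone fun k => Unbhd R k α :=
  fun _ _ hkl _ hβ => ⟨fun i hi => hβ.1 i (hi.trans_le (max_le_max_right _ hkl)), hβ.2⟩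

theorem nOmega_hasBasis {A : Type} (R : List A → List A → Prop) (α : PSeq A) :
    (nOmega R α).HasBasis (fun _ => True) fun k => Unbhd R k α :=
  Filter.hasBasis_iInf_principal (Unbhd_antitone R α).directed_ge

theorem preimage_forget_mem_nOmega_iff {A : Type} {R : List A → List A → Prop}
    (hR : ∀ a b, R a b → a <+: b) (α : PSeq A) (T : Set (List A)) :
    PSeq.forget ⁻¹' T ∈ nOmega R α ↔ ∀ b, R α.forget b → b ∈ T := by
  simp only [(nOmega_hasBasis R α).mem_iff, true_and]
  constructor
  · rintro ⟨k, hk⟩ b hb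
    obtain ⟨z, rfl⟩ := hR _ _ hb
    have hst : α.st ≤ max k α.st := le_max_right _ _
    have hmem : α.extend (max k α.st) z ∈ Unbhd R k α :=
      ⟨fun i hi => (α.extend_apply_of_lt z hi).symm, by rwa [α.forget_extend z hst]⟩
    simpa only [Set.mem_preimage, α.forget_extend z hst] using hk hmem
  · exact fun h => ⟨0, fun β hβ => h _ hβ.2⟩

theorem sucRel_isPrefix {A : Type} {a b : List A} (h : sucRel A a b) : a <+: b := by
  obtain ⟨x, rfl⟩ := h
  exact List.prefix_append a [x]

theorem treeRel_isPrefix {A : Type} (tk : TreeKind) {a b : List A} (h : treeRel A tk a b) :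
    a <+: b := by
  cases tk with
  | inn => exact sucRel_isPrefix h
  | rn => exact h.elim (fun hab => hab ▸ List.prefix_refl a) sucRel_isPrefix
  | itr =>
    induction h with
    | single hab => exact sucRel_isPrefix hab
    | tail _ hbc ih => exact ih.trans (sucRel_isPrefix hbc)
  | rt =>
    induction h with
    | refl => exact List.prefix_refl a
    | tail _ hbc ih => exact ih.trans (sucRel_isPrefix hbc)

theorem log_nOmega_subset_general (A : Type) (tk : TreeKind) :
    NLog (nOmega (treeRel A tk)) ⊆ KLog (treeRel A tk) :=
  NLog_subset_KLog_of_surjective PSeq.forget_surjective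
    (preimage_forget_mem_nOmega_iff fun _ _ => treeRel_isPrefix tk)

/-- For any tree frame `F = F_{ξη}[A]`: `Log(N_ω(F)) ⊆ Log(F)`. -/
theorem log_nOmega_subset (A : Type) [Nonempty A] (tk : TreeKind) :
    NLog (nOmega (treeRel A tk)) ⊆ KLog (treeRel A tk) :=
  log_nOmega_subset_general A tk
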